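/- arXiv:2602.04123 — 5 statements merged into one kernel-verified Lean document; each statement's English description precedes it below -/
import Mathlib

section
/- Let F = {x ∈ ℝ^d : h_l(x) ≤ d_l for all l ∈ H} be a nonempty compact convex set, where each h_l is a closed convex function and H is a finite index set. Then for any r ≥ 0, r ⊙ F = {X ∈ ℝ^d : H_l(X, r) ≤ r·d_l for all l ∈ H}, where H_l is the perspective function of h_l. -/
/-- `r ⊙ F`: the dilation of a set. -/
noncomputable def dil {V : Type*} [Zero V] [SMul ℝ V] (r : ℝ) (F : Set V) : Set V :=
  if r = 0 then {0} else (fun x => r • x) '' F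

/-- The perspective function of a real-valued (everywhere finite) closed convex
function `h` on `ℝ^d`: `H(x,t) = t·h(x/t)` for `t > 0`, `0` at `(0,0)`, and `+∞`
otherwise. -/
noncomputable def persp {d : ℕ} (h : (Fin d → ℝ) → ℝ) (x : Fin d → ℝ) (t : ℝ) : EReal :=
  if 0 < t then ((t * h (t⁻¹ • x) : ℝ) : EReal)
  else if t = 0 ∧ x = 0 then (0 : EReal) else ⊤

/-! For `r > 0` the claim is the rescaling `x ∈ F ↔ r • x ∈ r ⊙ F` of each constraint
`h l x ≤ dl l` by `r`. For `r = 0` the perspective is `0` at the origin and `+∞` elsewhere,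
so with at least one constraint both sides are `{0}`; without constraints `F` is the whole
space, and its compactness forces the space to be trivial. -/

open Pointwise

section Dilation

variable {V : Type*} [Zero V] [SMul ℝ V]

theorem dil_zero (F : Set V) : dil 0 F = {0} := if_pos rfl

theorem dil_of_ne_zero {r : ℝ} (hr : r ≠ 0) (F : Set V) : dil r F = r • F := if_neg hr

end Dilation

section Perspective

variable {d : ℕ} (h : (Fin d → ℝ) → ℝ)

theorem persp_of_pos {t : ℝ} (ht : 0 < t) (x : Fin d → ℝ) :
    persp h x t = ((t * h (t⁻¹ • x) : ℝ) : EReal) := if_pos ht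

theorem persp_zero_right_le_zero_iff {x : Fin d → ℝ} : persp h x 0 ≤ 0 ↔ x = 0 := by
  by_cases hx : x = 0 <;> simp [persp, hx]

theorem persp_le_mul_iff {t : ℝ} (ht : 0 < t) (x : Fin d → ℝ) (c : ℝ) :
    persp h x t ≤ ((t * c : ℝ) : EReal) ↔ h (t⁻¹ • x) ≤ c := by
  rw [persp_of_pos h ht, EReal.coe_le_coe_iff, mul_le_mul_iff_right₀ ht]

end Perspective

section Sublevel

variable {d : ℕ} {ι : Type*} (h : ι → (Fin d → ℝ) → ℝ) (c : ι → ℝ)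

theorem dil_sublevel_of_pos {r : ℝ} (hr : 0 < r) :
    dil r {x | ∀ l, h l x ≤ c l} = {X | ∀ l, persp (h l) X r ≤ ((r * c l : ℝ) : EReal)} := by
  ext X
  simp only [dil_of_ne_zero hr.ne', Set.mem_smul_set_iff_inv_smul_mem₀ hr.ne',
    Set.mem_ofPred_eq, persp_le_mul_iff _ hr]

theorem persp_sublevel_zero_right [Nonempty ι] :
    {X | ∀ l, persp (h l) X 0 ≤ ((0 * c l : ℝ) : EReal)} = {0} := by
  ext X
  simp only [zero_mul, EReal.coe_zero, persp_zero_right_le_zero_iff, Set.mem_ofPred_eq,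
    forall_const, Set.mem_singleton_iff]

end Sublevel

theorem subsingleton_of_isCompact_univ {E : Type*} [NormedAddCommGroup E] [NormedSpace ℝ E]
    (hE : IsCompact (Set.univ : Set E)) : Subsingleton E := by
  by_contra hE'
  rw [not_subsingleton_iff_nontrivial] at hE'
  exact not_compactSpace_iff.2 inferInstance (isCompact_univ_iff.1 hE)

theorem stmt_3_general {d : ℕ} {ι : Type*}
    (h : ι → (Fin d → ℝ) → ℝ) (dl : ι → ℝ)
    (F : Set (Fin d → ℝ))
    (hFdef : F = {x | ∀ l, h l x ≤ dl l})
    (hFc : IsCompact F)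
    (r : ℝ) (hr : 0 ≤ r) :
    dil r F = {X | ∀ l, persp (h l) X r ≤ ((r * dl l : ℝ) : EReal)} := by
  subst hFdef
  rcases hr.lt_or_eq with hr | rfl
  · exact dil_sublevel_of_pos h dl hr
  rw [dil_zero]
  rcases isEmpty_or_nonempty ι with hι | hι
  · have : Subsingleton (Fin d → ℝ) := subsingleton_of_isCompact_univ (by simpa using hFc)
    ext X
    simp [Subsingleton.elim X 0]
  · exact (persp_sublevel_zero_right h dl).symm

theorem stmt_3 {d : ℕ} {ι : Type*} [Fintype ι]
    (h : ι → (Fin d → ℝ) → ℝ) (dl : ι → ℝ)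
    (hconv : ∀ l, ConvexOn ℝ Set.univ (h l))
    (hcont : ∀ l, Continuous (h l))
    (F : Set (Fin d → ℝ))
    (hFdef : F = {x | ∀ l, h l x ≤ dl l})
    (hFne : F.Nonempty) (hFc : IsCompact F)
    (r : ℝ) (hr : 0 ≤ r) :
    dil r F = {X | ∀ l, persp (h l) X r ≤ ((r * dl l : ℝ) : EReal)} :=
  stmt_3_general h dl F hFdef hFc r hr
end

section
/- Let Λ, Γ ⊆ ℝ^d be nonempty compact convex sets with 0 ∈ Γ, and let r be a positive integer. Then the union over integers y with 0 ≤ y ≤ r of the sets (y ⊙ Λ) + ((r − y) ⊙ Γ) has convex hull equal to the union over real t ∈ [0, r] of (t ⊙ Λ) + ((r − t) ⊙ Γ). -/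
open scoped Pointwise

/-!
Write `P t := t • Λ + (r - t) • Γ`. For convex `Λ` and `Γ` a convex combination of `P s` and
`P t` is exactly `P` at the same combination of `s` and `t`, because `(p + q) • Λ = p • Λ + q • Λ`
for `p, q ≥ 0`. Hence `⋃ t ∈ [0, r], P t` is convex, which gives `⊆`; conversely each `P t` with
`t ∈ [n, n + 1]` is a convex combination of the integer slices `P n` and `P (n + 1)`.
-/

open Set

lemma dil_eq_smul {V : Type*} [AddCommGroup V] [Module ℝ V] (r : ℝ) {F : Set V}
    (hF : F.Nonempty) : dil r F = r • F := by
  unfold dil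
  split_ifs with h
  · rw [h, zero_smul_set hF]
    rfl
  · rfl

section Slices

variable {V : Type*} [AddCommGroup V] [Module ℝ V] {Λ Γ : Set V}

lemma Convex.combo_smul_add_sub_smul (hΛ : Convex ℝ Λ) (hΓ : Convex ℝ Γ)
    {a b c s t : ℝ} (ha : 0 ≤ a) (hb : 0 ≤ b) (hab : a + b = 1)
    (hs : s ∈ Icc 0 c) (ht : t ∈ Icc 0 c) :
    a • (s • Λ + (c - s) • Γ) + b • (t • Λ + (c - t) • Γ) =
      (a * s + b * t) • Λ + (c - (a * s + b * t)) • Γ := by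
  have hΓcoef : c - (a * s + b * t) = a * (c - s) + b * (c - t) := by
    linear_combination (-c) * hab
  rw [hΓcoef, hΛ.add_smul (mul_nonneg ha hs.1) (mul_nonneg hb ht.1),
    hΓ.add_smul (mul_nonneg ha (sub_nonneg.2 hs.2)) (mul_nonneg hb (sub_nonneg.2 ht.2)),
    smul_add, smul_add, smul_smul, smul_smul, smul_smul, smul_smul, add_add_add_comm]

lemma Convex.convex_biUnion_smul_add_sub_smul (hΛ : Convex ℝ Λ) (hΓ : Convex ℝ Γ) (c : ℝ) :
    Convex ℝ (⋃ t ∈ Icc 0 c, t • Λ + (c - t) • Γ) := by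
  intro x hx x' hx' a b ha hb hab
  simp only [mem_iUnion₂] at hx hx' ⊢
  obtain ⟨s, hs, hx⟩ := hx
  obtain ⟨t, ht, hx'⟩ := hx'
  refine ⟨a * s + b * t, by simpa using convex_Icc 0 c hs ht ha hb hab, ?_⟩
  rw [← hΛ.combo_smul_add_sub_smul hΓ ha hb hab hs ht]
  exact add_mem_add (smul_mem_smul_set hx) (smul_mem_smul_set hx')

lemma Convex.smul_add_sub_smul_subset_convexHull (hΛ : Convex ℝ Λ) (hΓ : Convex ℝ Γ)
    {c s t : ℝ} (hs : 0 ≤ s) (hsc : s + 1 ≤ c) (ht : t ∈ Icc s (s + 1)) :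
    t • Λ + (c - t) • Γ ⊆
      convexHull ℝ ((s • Λ + (c - s) • Γ) ∪ ((s + 1) • Λ + (c - (s + 1)) • Γ)) := by
  have ha : 0 ≤ s + 1 - t := sub_nonneg.2 ht.2
  have hb : 0 ≤ t - s := sub_nonneg.2 ht.1
  have hcombo := hΛ.combo_smul_add_sub_smul hΓ ha hb (by ring) ⟨hs, by linarith⟩
    ⟨by linarith, hsc⟩
  rw [show (s + 1 - t) * s + (t - s) * (s + 1) = t by ring] at hcombo
  rw [← hcombo]
  exact (add_subset_add (smul_set_mono (subset_union_left.trans (subset_convexHull ℝ _)))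
    (smul_set_mono (subset_union_right.trans (subset_convexHull ℝ _)))).trans
      ((convex_convexHull ℝ _).set_combo_subset ha hb (by ring))

end Slices

lemma exists_nat_lt_mem_Icc_add_one {r : ℕ} (hr : 0 < r) {t : ℝ} (ht : t ∈ Icc 0 (r : ℝ)) :
    ∃ n : ℕ, n < r ∧ t ∈ Icc (n : ℝ) (n + 1) := by
  rcases ht.2.lt_or_eq with htr | rfl
  · exact ⟨⌊t⌋₊, (Nat.floor_lt ht.1).2 htr, Nat.floor_le ht.1, (Nat.lt_floor_add_one t).le⟩
  · refine ⟨r - 1, by omega, ?_⟩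
    rw [Nat.cast_pred hr, sub_add_cancel]
    exact ⟨by linarith, le_rfl⟩

theorem stmt_8_general {d : ℕ} (Λ Γ : Set (Fin d → ℝ))
    (hΛne : Λ.Nonempty) (hΛconv : Convex ℝ Λ)
    (hΓne : Γ.Nonempty) (hΓconv : Convex ℝ Γ)
    (r : ℕ) (hr : 0 < r) :
    convexHull ℝ (⋃ y ∈ Finset.range (r + 1),
        dil (y : ℝ) Λ + dil ((r : ℝ) - y) Γ) =
      ⋃ t ∈ Set.Icc (0 : ℝ) (r : ℝ), dil t Λ + dil ((r : ℝ) - t) Γ := by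
  simp only [dil_eq_smul _ hΛne, dil_eq_smul _ hΓne]
  set S := ⋃ y ∈ Finset.range (r + 1), (y : ℝ) • Λ + ((r : ℝ) - y) • Γ
  have hslice {n : ℕ} (hn : n ≤ r) : (n : ℝ) • Λ + ((r : ℝ) - n) • Γ ⊆ S :=
    subset_biUnion_of_mem (u := fun y : ℕ ↦ (y : ℝ) • Λ + ((r : ℝ) - y) • Γ)
      (Finset.mem_coe.2 (Finset.mem_range_succ_iff.2 hn))
  refine (convexHull_min ?_ (hΛconv.convex_biUnion_smul_add_sub_smul hΓconv r)).antisymm ?_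
  · simp only [S, iUnion_subset_iff, Finset.mem_range_succ_iff]
    exact fun y hy ↦ subset_biUnion_of_mem (u := fun t : ℝ ↦ t • Λ + ((r : ℝ) - t) • Γ)
      ⟨Nat.cast_nonneg y, Nat.cast_le.2 hy⟩
  · simp only [iUnion_subset_iff]
    intro t ht
    obtain ⟨n, hnr, hnt⟩ := exists_nat_lt_mem_Icc_add_one hr ht
    refine (hΛconv.smul_add_sub_smul_subset_convexHull hΓconv n.cast_nonneg
      (by exact_mod_cast hnr) hnt).trans (convexHull_mono (union_subset (hslice hnr.le) ?_))
    exact_mod_cast hslice (n := n + 1) hnr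

theorem stmt_8 {d : ℕ} (Λ Γ : Set (Fin d → ℝ))
    (hΛne : Λ.Nonempty) (hΛc : IsCompact Λ) (hΛconv : Convex ℝ Λ)
    (hΓne : Γ.Nonempty) (hΓc : IsCompact Γ) (hΓconv : Convex ℝ Γ)
    (hΓ0 : (0 : Fin d → ℝ) ∈ Γ) (r : ℕ) (hr : 0 < r) :
    convexHull ℝ (⋃ y ∈ Finset.range (r + 1),
        dil (y : ℝ) Λ + dil ((r : ℝ) - y) Γ) =
      ⋃ t ∈ Set.Icc (0 : ℝ) (r : ℝ), dil t Λ + dil ((r : ℝ) - t) Γ :=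
  stmt_8_general Λ Γ hΛne hΛconv hΓne hΓconv r hr
end

section
/- Let Λ ⊆ ℝ^d be a nonempty compact convex set and r a positive integer. Consider the mixed-integer set S = {(x, y) ∈ ℝ^d × ℤ : 0 ≤ y ≤ r, x ∈ y ⊙ Λ}. Then conv(S) = {(x, y) ∈ ℝ^d × ℝ : 0 ≤ y ≤ r, x ∈ y ⊙ Λ}, where y ⊙ Λ := {y·z : z ∈ Λ} for y > 0 and {0} for y = 0. -/
/-!
The set on the right is convex: by convexity of `Λ`, `a • (s • Λ) + b • (t • Λ) = (a s + b t) • Λ`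
for `a, b, s, t ≥ 0`. Conversely, a point `(t z, t)` with `z ∈ Λ` and `0 ≤ t ≤ r` lies on the segment
from `(0, 0)` to `(r z, r)`, both of which are points of the mixed-integer set.
-/

open Set Pointwise

section

variable {V : Type*} [AddCommGroup V] [Module ℝ V]

theorem dil_eq_smul_set {Λ : Set V} (hΛ : Λ.Nonempty) (t : ℝ) : dil t Λ = t • Λ := by
  unfold dil
  split_ifs with ht
  · rw [ht, zero_smul_set hΛ, singleton_zero]
  · rfl

theorem convex_setOf_mem_smul_set {Λ : Set V} (hΛ : Convex ℝ Λ) (r : ℝ) :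
    Convex ℝ {p : V × ℝ | 0 ≤ p.2 ∧ p.2 ≤ r ∧ p.1 ∈ p.2 • Λ} := by
  rintro p ⟨hp₀, hpr, hpΛ⟩ q ⟨hq₀, hqr, hqΛ⟩ a b ha hb hab
  simp only [mem_ofPred_eq, Prod.fst_add, Prod.snd_add, Prod.smul_fst, Prod.smul_snd, smul_eq_mul]
  refine ⟨by positivity, by nlinarith, ?_⟩
  have hsum := add_mem_add (smul_mem_smul_set (a := a) hpΛ) (smul_mem_smul_set (a := b) hqΛ)
  rwa [smul_smul, smul_smul, ← hΛ.add_smul (by positivity) (by positivity)] at hsum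

end

theorem stmt_9_general {d : ℕ} (Λ : Set (Fin d → ℝ))
    (hΛne : Λ.Nonempty) (hΛconv : Convex ℝ Λ)
    (r : ℕ) :
    convexHull ℝ {p : (Fin d → ℝ) × ℝ |
        ∃ y : ℤ, 0 ≤ y ∧ y ≤ (r : ℤ) ∧ p.2 = (y : ℝ) ∧ p.1 ∈ dil (y : ℝ) Λ} =
      {p : (Fin d → ℝ) × ℝ | 0 ≤ p.2 ∧ p.2 ≤ (r : ℝ) ∧ p.1 ∈ dil p.2 Λ} := by
  simp_rw [dil_eq_smul_set hΛne]
  set S := {p : (Fin d → ℝ) × ℝ | ∃ y : ℤ, 0 ≤ y ∧ y ≤ (r : ℤ) ∧ p.2 = y ∧ p.1 ∈ (y : ℝ) • Λ}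
  refine (convexHull_min ?_ (convex_setOf_mem_smul_set hΛconv r)).antisymm ?_
  · rintro p ⟨y, hy₀, hyr, hp, hpΛ⟩
    refine ⟨?_, ?_, ?_⟩ <;> rw [hp]
    exacts [mod_cast hy₀, mod_cast hyr, hpΛ]
  · rintro ⟨x, t⟩ ⟨ht₀ : 0 ≤ t, htr : t ≤ r, z, hz, rfl : t • z = x⟩
    have hzero : (0 : (Fin d → ℝ) × ℝ) ∈ S := ⟨0, le_rfl, by positivity, by simp, by simp [hΛne]⟩
    have hvertex : (r : ℝ) • (z, (1 : ℝ)) ∈ S :=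
      ⟨r, by positivity, le_rfl, by simp, by simpa using smul_mem_smul_set hz⟩
    have hseg := (convex_convexHull ℝ S).smul_mem_of_zero_mem (subset_convexHull ℝ S hzero)
      (subset_convexHull ℝ S hvertex)
      ⟨div_nonneg ht₀ r.cast_nonneg, div_le_one_of_le₀ htr r.cast_nonneg⟩
    rwa [smul_smul, div_mul_cancel_of_imp (fun hr => by simp_all only; linarith),
      Prod.smul_mk, smul_eq_mul, mul_one] at hseg

theorem stmt_9 {d : ℕ} (Λ : Set (Fin d → ℝ))
    (hΛne : Λ.Nonempty) (hΛc : IsCompact Λ) (hΛconv : Convex ℝ Λ)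
    (r : ℕ) (hr : 0 < r) :
    convexHull ℝ {p : (Fin d → ℝ) × ℝ |
        ∃ y : ℤ, 0 ≤ y ∧ y ≤ (r : ℤ) ∧ p.2 = (y : ℝ) ∧ p.1 ∈ dil (y : ℝ) Λ} =
      {p : (Fin d → ℝ) × ℝ | 0 ≤ p.2 ∧ p.2 ≤ (r : ℝ) ∧ p.1 ∈ dil p.2 Λ} :=
  stmt_9_general Λ hΛne hΛconv r
end

section
/- Let P = {y ∈ ℝ^k : A y ≤ b} ⊆ [0,1]^k where A is a totally unimodular integer matrix and b is an integer vector. Then for every positive integer r, every integer point Y of the dilated polytope r·P = {y : A y ≤ r·b} can be written as a sum Y = y₁ + ... + y_r of r integer points y₁, ..., y_r ∈ P ∩ {0,1}^k. -/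
/-!
Let `P = {x | A x ≤ b}`. If `A Y ≤ (q + 1) b`, the point `Y / (q + 1)` lies in the polytope
`P ∩ (Y - q P)`, which is cut out by the stacked matrix `[A; -A]`, again totally unimodular.
Every vertex of a polytope given by a totally unimodular system with integral right-hand side is
integral: its tight rows contain a nonsingular square subsystem, whose determinant is `±1`, so
Cramer's rule gives an integral solution. Hence `P ∩ (Y - q P)` contains an integer point `z`, which
is binary because `P ⊆ [0, 1]^k`, and `Y - z` is an integer point of `q P`; induct on `q`.
-/

/-- A matrix is totally unimodular if every square submatrix has determinant
in `{-1, 0, 1}`. -/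
def TotallyUnimodular {m k : ℕ} (A : Matrix (Fin m) (Fin k) ℤ) : Prop :=
  ∀ (n : ℕ) (f : Fin n → Fin m) (g : Fin n → Fin k),
    Function.Injective f → Function.Injective g →
      (A.submatrix f g).det ∈ ({-1, 0, 1} : Set ℤ)

theorem totallyUnimodular_iff_isTotallyUnimodular {m k : ℕ} (A : Matrix (Fin m) (Fin k) ℤ) :
    TotallyUnimodular A ↔ A.IsTotallyUnimodular := by
  have : ({-1, 0, 1} : Set ℤ) = Set.range SignType.cast := by
    ext a
    constructor
    · rintro (rfl | rfl | rfl)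
      exacts [⟨-1, rfl⟩, ⟨0, rfl⟩, ⟨1, rfl⟩]
    · rintro ⟨s, rfl⟩
      cases s <;> simp
  rw [TotallyUnimodular, Matrix.IsTotallyUnimodular, this]

open Filter Topology

namespace Matrix

theorem exists_det_submatrix_ne_zero_of_mulVec_injective {τ n K : Type*} [Field K] [Fintype τ]
    [Fintype n] [DecidableEq n] (N : Matrix τ n K) (hN : Function.Injective N.mulVec) :
    ∃ f : n → τ, (N.submatrix f id).det ≠ 0 := by
  have hspan : Submodule.span K (Set.range N.row) = ⊤ := by
    apply Submodule.eq_top_of_finrank_eq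
    rw [← N.rank_eq_finrank_span_row, Matrix.rank, LinearMap.finrank_range_of_inj hN]
  obtain ⟨κ, a, -, hsp, hli⟩ := exists_linearIndependent' K N.row
  let e := (Module.Basis.mk hli (hsp.trans hspan).ge).indexEquiv (Pi.basisFun K n)
  refine ⟨a ∘ e.symm, ?_⟩
  rw [← isUnit_iff_ne_zero, ← isUnit_iff_isUnit_det, ← linearIndependent_rows_iff_isUnit]
  exact hli.comp e.symm e.symm.injective

theorem IsTotallyUnimodular.fromRows_neg {m n R : Type*} [CommRing R] {A : Matrix m n R}
    (hA : A.IsTotallyUnimodular) : (fromRows A (-A)).IsTotallyUnimodular := by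
  rw [isTotallyUnimodular_iff] at hA ⊢
  intro k f g
  have hsigns : (fromRows A (-A)).submatrix f g =
      diagonal (fun p => Sum.elim 1 (-1) (f p)) * A.submatrix (Sum.elim id id ∘ f) g := by
    ext p q
    rcases hfp : f p with i | i <;> simp [diagonal_mul, hfp]
  rw [hsigns, det_mul, det_diagonal]
  change _ ∈ MonoidHom.mrange SignType.castHom.toMonoidHom
  refine mul_mem (prod_mem fun p _ => ?_) (hA _ _ _)
  rcases f p with i | i
  exacts [⟨1, by simp⟩, ⟨-1, by simp⟩]

variable {ι ι' n : Type*} [Fintype n]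

theorem map_intCast_mulVec_intCast {R : Type*} [Ring R] (M : Matrix ι n ℤ) (z : n → ℤ) :
    M.map (Int.cast : ℤ → R) *ᵥ (Int.cast ∘ z) = Int.cast ∘ (M *ᵥ z) :=
  funext fun i => ((Int.castRingHom R).map_mulVec M z i).symm

theorem exists_intCast_eq_of_mulVec_eq {R : Type*} [CommRing R] [DecidableEq n]
    {B : Matrix n n ℤ} (hB : IsUnit B.det) {x : n → R} {c : n → ℤ}
    (hx : B.map (Int.cast : ℤ → R) *ᵥ x = Int.cast ∘ c) :
    ∃ z : n → ℤ, Int.cast ∘ z = x := by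
  have hinj : Function.Injective (B.map (Int.cast : ℤ → R)).mulVec := by
    refine mulVec_injective_of_isUnit ((isUnit_iff_isUnit_det _).2 ?_)
    exact (Int.castRingHom R).map_det B ▸ hB.map _
  refine ⟨B⁻¹ *ᵥ c, hinj ?_⟩
  rw [hx, map_intCast_mulVec_intCast, mulVec_mulVec, mul_nonsing_inv _ hB, one_mulVec]

def polyhedron (M : Matrix ι n ℤ) (d : ι → ℤ) : Set (n → ℝ) :=
  {x | M.map (Int.cast : ℤ → ℝ) *ᵥ x ≤ Int.cast ∘ d}

theorem polyhedron_fromRows (M : Matrix ι n ℤ) (N : Matrix ι' n ℤ) (d : ι → ℤ) (e : ι' → ℤ) :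
    (fromRows M N).polyhedron (Sum.elim d e) = M.polyhedron d ∩ N.polyhedron e := by
  ext x
  simp only [polyhedron, Set.mem_ofPred_eq, Set.mem_inter_iff, fromRows_map, fromRows_mulVec,
    Sum.comp_elim, Sum.elim_le_elim_iff]

theorem intCast_mem_polyhedron_iff (M : Matrix ι n ℤ) (d : ι → ℤ) (z : n → ℤ) :
    Int.cast ∘ z ∈ M.polyhedron d ↔ M *ᵥ z ≤ d := by
  simp only [polyhedron, Set.mem_ofPred_eq, map_intCast_mulVec_intCast, Pi.le_def,
    Function.comp_apply, Int.cast_le]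

theorem isClosed_polyhedron (M : Matrix ι n ℤ) (d : ι → ℤ) : IsClosed (M.polyhedron d) :=
  isClosed_le (by fun_prop) continuous_const

section Vertices

variable [Finite ι] {M : Matrix ι n ℤ} {d : ι → ℤ} {x v : n → ℝ}

theorem eventually_add_smul_mem_polyhedron (hx : x ∈ M.polyhedron d)
    (hv : ∀ i, (M.map (Int.cast : ℤ → ℝ) *ᵥ x) i = d i → (M.map (Int.cast : ℤ → ℝ) *ᵥ v) i = 0) :
    ∀ᶠ t in 𝓝 (0 : ℝ), x + t • v ∈ M.polyhedron d := by
  simp only [polyhedron, Set.mem_ofPred_eq, Pi.le_def, mulVec_add, mulVec_smul, Pi.add_apply,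
    Pi.smul_apply, smul_eq_mul, Function.comp_apply]
  refine eventually_all.2 fun i => ?_
  by_cases hi : (M.map (Int.cast : ℤ → ℝ) *ᵥ x) i = d i
  · simp [hv i hi, hi]
  · have hlt : (M.map (Int.cast : ℤ → ℝ) *ᵥ x) i < d i := lt_of_le_of_ne (hx i) hi
    refine (ContinuousAt.eventually_lt (by fun_prop) continuousAt_const ?_).mono fun _ => le_of_lt
    simpa using hlt

theorem eq_zero_of_mem_extremePoints_polyhedron (hx : x ∈ (M.polyhedron d).extremePoints ℝ)
    (hv : ∀ i, (M.map (Int.cast : ℤ → ℝ) *ᵥ x) i = d i → (M.map (Int.cast : ℤ → ℝ) *ᵥ v) i = 0) :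
    v = 0 := by
  rw [mem_extremePoints_iff_left] at hx
  have hpos := eventually_add_smul_mem_polyhedron hx.1 hv
  have hneg := eventually_add_smul_mem_polyhedron hx.1 (v := -v)
    fun i hi => by simp [mulVec_neg, hv i hi]
  obtain ⟨t, ⟨h₁, h₂⟩, ht⟩ :=
    (((hpos.and hneg).filter_mono nhdsWithin_le_nhds).and self_mem_nhdsWithin).exists (f := 𝓝[≠] 0)
  have := hx.2 _ h₁ _ h₂ <| by
    simpa [sub_eq_add_neg] using mem_openSegment_add_sub (𝕜 := ℝ) x (t • v)
  exact (smul_eq_zero.1 (by simpa using this)).resolve_left ht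

theorem IsTotallyUnimodular.exists_intCast_eq_of_mem_extremePoints [Fintype ι] [DecidableEq n]
    (hM : M.IsTotallyUnimodular) (hx : x ∈ (M.polyhedron d).extremePoints ℝ) :
    ∃ z : n → ℤ, Int.cast ∘ z = x := by
  classical
  let T := {i // (M.map (Int.cast : ℤ → ℝ) *ᵥ x) i = d i}
  let N := (M.map (Int.cast : ℤ → ℝ)).submatrix (Subtype.val : T → ι) id
  have hN : Function.Injective N.mulVec := fun v w hvw =>
    sub_eq_zero.1 <| eq_zero_of_mem_extremePoints_polyhedron hx fun i hi => by
      rw [mulVec_sub, Pi.sub_apply, sub_eq_zero]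
      exact congrFun hvw ⟨i, hi⟩
  obtain ⟨f, hf⟩ := N.exists_det_submatrix_ne_zero_of_mulVec_injective hN
  let B := M.submatrix (Subtype.val ∘ f) id
  have hB : IsUnit B.det := by
    have hBf : ((B.det : ℤ) : ℝ) = (N.submatrix f id).det := (Int.castRingHom ℝ).map_det B
    have hne : B.det ≠ 0 := fun h => hf (by rw [← hBf, h, Int.cast_zero])
    obtain ⟨s, hs⟩ : B.det ∈ Set.range SignType.cast :=
      (isTotallyUnimodular_iff_fintype M).1 hM n _ id
    rw [← hs] at hne ⊢
    cases s <;> simp at hne ⊢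
  exact exists_intCast_eq_of_mulVec_eq hB (c := d ∘ Subtype.val ∘ f) (funext fun j => (f j).2)

end Vertices

variable [Fintype ι] [DecidableEq n]

theorem IsTotallyUnimodular.exists_mulVec_le {M : Matrix ι n ℤ} (hM : M.IsTotallyUnimodular)
    {d : ι → ℤ} (hbdd : Bornology.IsBounded (M.polyhedron d)) (hne : (M.polyhedron d).Nonempty) :
    ∃ z : n → ℤ, M *ᵥ z ≤ d := by
  obtain ⟨x, hx⟩ := (Metric.isCompact_of_isClosed_isBounded (isClosed_polyhedron M d)
    hbdd).extremePoints_nonempty hne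
  obtain ⟨z, rfl⟩ := hM.exists_intCast_eq_of_mem_extremePoints hx
  exact ⟨z, (intCast_mem_polyhedron_iff M d z).1 (extremePoints_subset hx)⟩

variable {A : Matrix ι n ℤ} {b : ι → ℤ}

theorem IsTotallyUnimodular.exists_mulVec_le_and_mulVec_sub_le (hA : A.IsTotallyUnimodular)
    (hbdd : Bornology.IsBounded (A.polyhedron b)) {q : ℕ} {Y : n → ℤ}
    (hY : A *ᵥ Y ≤ (q + 1) • b) : ∃ z : n → ℤ, A *ᵥ z ≤ b ∧ A *ᵥ (Y - z) ≤ q • b := by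
  have hq : (0 : ℝ) < q + 1 := by positivity
  have hYq : ∀ i, ((q : ℝ) + 1)⁻¹ * (A *ᵥ Y) i ≤ b i := fun i => by
    rw [inv_mul_le_iff₀ hq]
    exact_mod_cast hY i
  have hne : (A.polyhedron b ∩ (-A).polyhedron (q • b - A *ᵥ Y)).Nonempty := by
    refine ⟨((q : ℝ) + 1)⁻¹ • (Int.cast ∘ Y), fun i => ?_, fun i => ?_⟩ <;>
      simp only [neg_mulVec, mulVec_smul, map_intCast_mulVec_intCast, Pi.neg_apply,
        Pi.smul_apply, Pi.sub_apply, Function.comp_apply, smul_eq_mul,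
        nsmul_eq_mul, Pi.mul_apply, Pi.natCast_apply]
    · exact hYq i
    · have := mul_le_mul_of_nonneg_left (hYq i) q.cast_nonneg
      push_cast
      field_simp at this ⊢
      linarith
  rw [← polyhedron_fromRows] at hne
  obtain ⟨z, hz⟩ := hA.fromRows_neg.exists_mulVec_le
    (by rw [polyhedron_fromRows]; exact hbdd.subset Set.inter_subset_left) hne
  rw [fromRows_mulVec, Sum.elim_le_elim_iff, neg_mulVec] at hz
  refine ⟨z, hz.1, fun i => ?_⟩
  have := hz.2 i
  simp only [mulVec_sub, Pi.sub_apply, Pi.neg_apply] at this ⊢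
  linarith

theorem IsTotallyUnimodular.exists_sum_eq_of_mulVec_le (hA : A.IsTotallyUnimodular)
    (hbdd : Bornology.IsBounded (A.polyhedron b)) :
    ∀ (q : ℕ) {Y : n → ℤ}, A *ᵥ Y ≤ (q + 1) • b →
      ∃ y : Fin (q + 1) → n → ℤ, (∀ j, A *ᵥ y j ≤ b) ∧ Y = ∑ j, y j
  | 0, Y, hY => ⟨fun _ => Y, fun _ => by simpa using hY, by simp⟩
  | q + 1, Y, hY => by
    obtain ⟨z, hz, hYz⟩ := hA.exists_mulVec_le_and_mulVec_sub_le hbdd hY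
    obtain ⟨y, hy, hsum⟩ := hA.exists_sum_eq_of_mulVec_le hbdd q hYz
    refine ⟨Fin.cons z y, Fin.cases hz hy, ?_⟩
    rw [Fin.sum_univ_succ, Fin.cons_zero]
    simp only [Fin.cons_succ, ← hsum, add_sub_cancel]

end Matrix

/-- Integer decomposition property of polytopes described by totally unimodular
systems: every integer point of `r·P` is a sum of `r` binary points of `P`. -/
theorem stmt_13 {m k : ℕ} (A : Matrix (Fin m) (Fin k) ℤ) (b : Fin m → ℤ)
    (hTU : TotallyUnimodular A)
    (hP : ∀ y : Fin k → ℝ,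
      (∀ i, (A.map (Int.cast : ℤ → ℝ)).mulVec y i ≤ (b i : ℝ)) →
        ∀ s, y s ∈ Set.Icc (0 : ℝ) 1)
    (r : ℕ) (hr : 0 < r) (Y : Fin k → ℤ)
    (hY : ∀ i, A.mulVec Y i ≤ (r : ℤ) * b i) :
    ∃ y : Fin r → (Fin k → ℤ),
      (∀ j, (∀ i, A.mulVec (y j) i ≤ b i) ∧ ∀ s, y j s ∈ ({0, 1} : Set ℤ)) ∧
        Y = ∑ j, y j := by
  rw [totallyUnimodular_iff_isTotallyUnimodular] at hTU
  have hbdd : Bornology.IsBounded (A.polyhedron b) :=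
    (Metric.isBounded_Icc (0 : Fin k → ℝ) 1).subset fun y hy =>
      ⟨fun s => (hP y hy s).1, fun s => (hP y hy s).2⟩
  obtain ⟨q, rfl⟩ := Nat.exists_eq_add_one_of_ne_zero hr.ne'
  obtain ⟨y, hy, rfl⟩ := hTU.exists_sum_eq_of_mulVec_le hbdd q (Y := Y) fun i => by simpa using hY i
  refine ⟨y, fun j => ⟨hy j, fun s => ?_⟩, rfl⟩
  have hbox : (y j s : ℝ) ∈ Set.Icc 0 1 :=
    hP _ ((Matrix.intCast_mem_polyhedron_iff A b (y j)).2 (hy j)) s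
  obtain ⟨h₀, h₁⟩ : 0 ≤ y j s ∧ y j s ≤ 1 := by exact_mod_cast Set.mem_Icc.1 hbox
  simp only [Set.mem_insert_iff, Set.mem_singleton_iff]
  omega
end

section
/- Let Λ ⊆ ℝ^d be a nonempty compact convex set with 0 ∉ Λ, and r a positive integer. For the mixed-integer set S = {(x, y) : y ∈ {0,1,...,r}, x ∈ y ⊙ Λ}, the projection of conv(S) onto the x-space equals the union over t ∈ [0, r] of t ⊙ Λ, which in general strictly contains r' ⊙ Λ-unions over integer r' only; moreover, proj_x conv(S) = conv(∪_{y=0}^{r} y ⊙ Λ). -/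
open Set Pointwise

section

variable {V : Type*} [AddCommGroup V] [Module ℝ V]

theorem dil_eq_smul_set_s19 {s : Set V} (hs : s.Nonempty) (t : ℝ) : dil t s = t • s := by
  unfold dil
  split_ifs with ht
  · rw [ht, zero_smul_set hs]
    rfl
  · rfl

theorem segment_zero_smul {R : ℝ} (hR : 0 ≤ R) (z : V) :
    segment ℝ 0 (R • z) = (· • z) '' Icc 0 R := by
  have hIcc : (· * R) '' Icc (0 : ℝ) 1 = Icc 0 R := by
    simpa using image_mul_right_Icc zero_le_one hR
  rw [segment_eq_image, ← hIcc, image_image]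
  simp [smul_smul]

theorem biUnion_Icc_smul_eq_convexJoin {R : ℝ} (hR : 0 ≤ R) (s : Set V) :
    ⋃ t ∈ Icc 0 R, t • s = convexJoin ℝ {0} (R • s) := by
  rw [convexJoin_singleton_left, ← image_smul, biUnion_image]
  simp_rw [segment_zero_smul hR]
  ext x
  simp only [mem_iUnion, mem_smul_set, mem_image, exists_prop]
  tauto

theorem Convex.convex_biUnion_Icc_smul {s : Set V} (hs : Convex ℝ s) {R : ℝ} (hR : 0 ≤ R) :
    Convex ℝ (⋃ t ∈ Icc 0 R, t • s) := by
  rw [biUnion_Icc_smul_eq_convexJoin hR]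
  exact (convex_singleton 0).convexJoin (hs.smul R)

theorem Convex.convexHull_biUnion_range_natCast_smul {s : Set V} (hs : Convex ℝ s)
    (hne : s.Nonempty) (n : ℕ) :
    convexHull ℝ (⋃ k ∈ Finset.range (n + 1), (k : ℝ) • s) = ⋃ t ∈ Icc 0 (n : ℝ), t • s := by
  apply subset_antisymm
  · refine convexHull_min ?_ (hs.convex_biUnion_Icc_smul n.cast_nonneg)
    refine iUnion₂_mono' fun k hk => ⟨k, ⟨k.cast_nonneg, ?_⟩, subset_rfl⟩
    exact_mod_cast Finset.mem_range_succ_iff.mp hk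
  · rw [biUnion_Icc_smul_eq_convexJoin n.cast_nonneg]
    refine (convexJoin_subset_convexHull _ _).trans (convexHull_mono (union_subset ?_ ?_))
    · rw [singleton_subset_iff]
      exact mem_biUnion (x := 0) (by simp) (by simp [zero_smul_set hne])
    · exact subset_biUnion_of_mem (u := fun k : ℕ => (k : ℝ) • s) (Finset.self_mem_range_succ n)

theorem fst_image_setOf_intCast_smul (s : Set V) (n : ℕ) :
    Prod.fst '' {p : V × ℝ | ∃ y : ℤ, 0 ≤ y ∧ y ≤ (n : ℤ) ∧ p.2 = (y : ℝ) ∧ p.1 ∈ (y : ℝ) • s} =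
      ⋃ k ∈ Finset.range (n + 1), (k : ℝ) • s := by
  ext x
  simp only [mem_image, mem_ofPred_eq, Prod.exists, exists_and_right, exists_eq_right,
    mem_iUnion, Finset.mem_range, exists_prop]
  constructor
  · rintro ⟨_, y, hy0, hyn, -, hx⟩
    lift y to ℕ using hy0
    exact ⟨y, by omega, by exact_mod_cast hx⟩
  · rintro ⟨k, hk, hx⟩
    exact ⟨k, k, k.cast_nonneg, by omega, by simp, by exact_mod_cast hx⟩

end

theorem stmt_19_general {d : ℕ} (Λ : Set (Fin d → ℝ))
    (hΛne : Λ.Nonempty) (hΛconv : Convex ℝ Λ)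
    (r : ℕ)
    (S : Set ((Fin d → ℝ) × ℝ))
    (hS : S = {p | ∃ y : ℤ, 0 ≤ y ∧ y ≤ (r : ℤ) ∧ p.2 = (y : ℝ) ∧
        p.1 ∈ dil (y : ℝ) Λ}) :
    (Prod.fst '' convexHull ℝ S = ⋃ t ∈ Set.Icc (0 : ℝ) (r : ℝ), dil t Λ) ∧
      Prod.fst '' convexHull ℝ S =
        convexHull ℝ (⋃ y ∈ Finset.range (r + 1), dil (y : ℝ) Λ) := by
  simp only [hS, dil_eq_smul_set_s19 hΛne]
  rw [← hΛconv.convexHull_biUnion_range_natCast_smul hΛne r, ← fst_image_setOf_intCast_smul]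
  have hproj := (LinearMap.fst ℝ (Fin d → ℝ) ℝ).image_convexHull
  exact ⟨hproj _, hproj _⟩

theorem stmt_19 {d : ℕ} (Λ : Set (Fin d → ℝ))
    (hΛne : Λ.Nonempty) (hΛc : IsCompact Λ) (hΛconv : Convex ℝ Λ)
    (h0 : (0 : Fin d → ℝ) ∉ Λ) (r : ℕ) (hr : 0 < r)
    (S : Set ((Fin d → ℝ) × ℝ))
    (hS : S = {p | ∃ y : ℤ, 0 ≤ y ∧ y ≤ (r : ℤ) ∧ p.2 = (y : ℝ) ∧
        p.1 ∈ dil (y : ℝ) Λ}) :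
    (Prod.fst '' convexHull ℝ S = ⋃ t ∈ Set.Icc (0 : ℝ) (r : ℝ), dil t Λ) ∧
      Prod.fst '' convexHull ℝ S =
        convexHull ℝ (⋃ y ∈ Finset.range (r + 1), dil (y : ℝ) Λ) :=
  stmt_19_general Λ hΛne hΛconv r S hS
end
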